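/- Upper bound on the eigenvalue by the degradation rate. If U is a decaying eigenfunction with eigenvalue Λ for the parameter V ≥ 0, where the degradation rate is constant μ(x) ≡ μ₀ and τ ≥ 0, and if ∫₀^∞ x·U(x)dx > 0, then Λ ≤ μ₀. -/

import Mathlib

/-! Multiply the eigenvalue equation by `x` and integrate over `(0,∞)`. Integrating by parts,
the transport term contributes `-V ∫ τU`, the boundary terms `x τU` vanishing at both ends. Since
`∫ x κ(x,y) dx = y/2`, Fubini shows that the fragmentation gain `2 ∫ x ∫ₓ^∞ β κ U` exactly
cancels the loss `∫ x β U`. What remains is `Λ ∫ xU = μ₀ ∫ xU - V ∫ τU ≤ μ₀ ∫ xU`, and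
`∫ xU > 0` gives `Λ ≤ μ₀`. -/

open MeasureTheory Set Filter Topology

/-- A *decaying eigenfunction* `U` (with `U'` the pointwise derivative of `τ U`) with
eigenvalue `Λ` for the parameter `V` of the prion growth-fragmentation operator:
`U ≥ 0`, `τ U` is differentiable on `(0,∞)` with derivative `U'`, the eigenvalue equation
`V (τU)'(x) + (μ(x)+β(x)) U(x) − 2 ∫ₓ^∞ β(y) κ(x,y) U(y) dy = Λ U(x)` holds for `x > 0`,
the functions `U, xU, τU, μU, xμU, βU, xβU, (τU)'` are integrable on `(0,∞)`,
`β(y)κ(x,y)U(y)` and `x β(y)κ(x,y)U(y)` are integrable on `{0 < x < y}`, and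
`τU → 0` at `0⁺`, `τU → 0` and `x τU → 0` at `∞`. -/
structure DecayingEigenfunction (V Lam : ℝ) (tau mu beta : ℝ → ℝ)
    (kappa : ℝ → ℝ → ℝ) (U U' : ℝ → ℝ) : Prop where
  nonneg : ∀ x > 0, 0 ≤ U x
  hasDeriv : ∀ x > 0, HasDerivAt (fun y => tau y * U y) (U' x) x
  eigen : ∀ x > 0,
    V * U' x + (mu x + beta x) * U x - 2 * ∫ y in Ioi x, beta y * kappa x y * U y
      = Lam * U x
  int_U : IntegrableOn U (Ioi 0)
  int_xU : IntegrableOn (fun x => x * U x) (Ioi 0)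
  int_tauU : IntegrableOn (fun x => tau x * U x) (Ioi 0)
  int_muU : IntegrableOn (fun x => mu x * U x) (Ioi 0)
  int_xmuU : IntegrableOn (fun x => x * mu x * U x) (Ioi 0)
  int_betaU : IntegrableOn (fun x => beta x * U x) (Ioi 0)
  int_xbetaU : IntegrableOn (fun x => x * beta x * U x) (Ioi 0)
  int_U' : IntegrableOn U' (Ioi 0)
  int_frag : IntegrableOn (fun p : ℝ × ℝ => beta p.2 * kappa p.1 p.2 * U p.2)
      {p : ℝ × ℝ | 0 < p.1 ∧ p.1 < p.2}
  int_xfrag : IntegrableOn (fun p : ℝ × ℝ => p.1 * (beta p.2 * kappa p.1 p.2 * U p.2))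
      {p : ℝ × ℝ | 0 < p.1 ∧ p.1 < p.2}
  lim_zero : Tendsto (fun x => tau x * U x) (nhdsWithin 0 (Ioi 0)) (nhds 0)
  lim_top : Tendsto (fun x => tau x * U x) atTop (nhds 0)
  lim_xtop : Tendsto (fun x => x * (tau x * U x)) atTop (nhds 0)

theorem integral_Ioi_of_hasDerivAt_of_tendsto_nhdsGT {E : Type*} [NormedAddCommGroup E]
    [NormedSpace ℝ E] [CompleteSpace E] {f f' : ℝ → E} {a : ℝ} {fa fb : E}
    (hderiv : ∀ x ∈ Ioi a, HasDerivAt f (f' x) x) (f'int : IntegrableOn f' (Ioi a))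
    (ha : Tendsto f (𝓝[>] a) (𝓝 fa)) (hb : Tendsto f atTop (𝓝 fb)) :
    ∫ x in Ioi a, f' x = fb - fa := by
  classical
  have hcont : ContinuousWithinAt (Function.update f a fa) (Ici a) a := by
    rwa [continuousWithinAt_update_same, Ici_sdiff_left]
  have hderiv' : ∀ x ∈ Ioi a, HasDerivAt (Function.update f a fa) (f' x) x := fun x hx =>
    (hderiv x hx).congr_of_eventuallyEq <| by
      filter_upwards [Ioi_mem_nhds hx] with y hy using Function.update_of_ne hy.ne' _ _
  have hb' : Tendsto (Function.update f a fa) atTop (𝓝 fb) := hb.congr' <| by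
    filter_upwards [eventually_gt_atTop a] with y hy using (Function.update_of_ne hy.ne' _ _).symm
  simpa using integral_Ioi_of_hasDerivAt_of_tendsto hcont hderiv' f'int hb'

theorem integrable_prod_restrict_Ioi_of_integrableOn_lt {F : ℝ × ℝ → ℝ}
    (hF : IntegrableOn F {p : ℝ × ℝ | 0 < p.1 ∧ p.1 < p.2})
    (hzero : ∀ p : ℝ × ℝ, p.2 ≤ p.1 → F p = 0) :
    Integrable F ((volume.restrict (Ioi 0)).prod (volume.restrict (Ioi 0))) := by
  rw [Measure.prod_restrict, ← Measure.volume_eq_prod]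
  refine hF.of_forall_sdiff_eq_zero (measurableSet_Ioi.prod measurableSet_Ioi) ?_
  rintro ⟨x, y⟩ ⟨⟨hx, -⟩, hlt⟩
  exact hzero _ (not_lt.mp fun hxy => hlt ⟨hx, hxy⟩)

section Fragmentation

variable {beta U : ℝ → ℝ} {kappa : ℝ → ℝ → ℝ}

theorem integral_Ioi_mul_kernel_eq_half {y : ℝ} (hy : 0 < y) (hsupp : ∀ x, y ≤ x → kappa x y = 0)
    (hmom : ∫ x in (0:ℝ)..y, x * kappa x y = y / 2) :
    ∫ x in Ioi 0, x * kappa x y = y / 2 := by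
  rw [setIntegral_eq_of_subset_of_forall_sdiff_eq_zero measurableSet_Ioi Ioc_subset_Ioi_self,
    ← intervalIntegral.integral_of_le hy.le, hmom]
  rintro x ⟨hx, hxy⟩
  rw [hsupp x (not_lt.mp fun h => hxy ⟨hx, h.le⟩), mul_zero]

theorem integral_fragmentation_slice_fst {x : ℝ} (hx : 0 ≤ x)
    (hsupp : ∀ y, y ≤ x → kappa x y = 0) :
    ∫ y in Ioi 0, x * (beta y * kappa x y * U y) = x * ∫ y in Ioi x, beta y * kappa x y * U y := by
  rw [integral_const_mul,
    setIntegral_eq_of_subset_of_forall_sdiff_eq_zero measurableSet_Ioi (Ioi_subset_Ioi hx)]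
  rintro y ⟨-, hy⟩
  rw [hsupp y (not_lt.mp hy), mul_zero, zero_mul]

theorem integral_fragmentation_slice_snd {y : ℝ} (hy : 0 < y)
    (hsupp : ∀ x, y ≤ x → kappa x y = 0) (hmom : ∫ x in (0:ℝ)..y, x * kappa x y = y / 2) :
    ∫ x in Ioi 0, x * (beta y * kappa x y * U y) = y * beta y * U y / 2 := by
  have hfactor : ∀ x, x * (beta y * kappa x y * U y) = beta y * U y * (x * kappa x y) :=
    fun x => by ring
  simp_rw [hfactor]
  rw [integral_const_mul, integral_Ioi_mul_kernel_eq_half hy hsupp hmom]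
  ring

theorem integrableOn_fragmentation_moment (hsupp : ∀ x y : ℝ, y ≤ x → kappa x y = 0)
    (hint : IntegrableOn (fun p : ℝ × ℝ => p.1 * (beta p.2 * kappa p.1 p.2 * U p.2))
      {p : ℝ × ℝ | 0 < p.1 ∧ p.1 < p.2}) :
    IntegrableOn (fun x => x * ∫ y in Ioi x, beta y * kappa x y * U y) (Ioi 0) := by
  have hF := integrable_prod_restrict_Ioi_of_integrableOn_lt hint fun p hp => by
    simp [hsupp p.1 p.2 hp]
  exact IntegrableOn.congr_fun hF.integral_prod_left
    (fun x hx => integral_fragmentation_slice_fst (le_of_lt hx) (hsupp x)) measurableSet_Ioi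

theorem integral_fragmentation_moment (hsupp : ∀ x y : ℝ, y ≤ x → kappa x y = 0)
    (hmom : ∀ y > 0, ∫ x in (0:ℝ)..y, x * kappa x y = y / 2)
    (hint : IntegrableOn (fun p : ℝ × ℝ => p.1 * (beta p.2 * kappa p.1 p.2 * U p.2))
      {p : ℝ × ℝ | 0 < p.1 ∧ p.1 < p.2}) :
    2 * ∫ x in Ioi 0, x * ∫ y in Ioi x, beta y * kappa x y * U y
      = ∫ y in Ioi 0, y * beta y * U y := by
  have hF := integrable_prod_restrict_Ioi_of_integrableOn_lt hint fun p hp => by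
    simp [hsupp p.1 p.2 hp]
  calc 2 * ∫ x in Ioi 0, x * ∫ y in Ioi x, beta y * kappa x y * U y
      = 2 * ∫ x in Ioi 0, ∫ y in Ioi 0, x * (beta y * kappa x y * U y) := by
        rw [setIntegral_congr_fun measurableSet_Ioi
          fun x hx => integral_fragmentation_slice_fst (le_of_lt hx) (hsupp x)]
    _ = 2 * ∫ y in Ioi 0, ∫ x in Ioi 0, x * (beta y * kappa x y * U y) := by
        rw [← integral_prod _ hF, integral_prod_symm _ hF]
    _ = 2 * ∫ y in Ioi 0, y * beta y * U y / 2 := by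
        rw [setIntegral_congr_fun measurableSet_Ioi
          fun y hy => integral_fragmentation_slice_snd hy (hsupp · y) (hmom y hy)]
    _ = ∫ y in Ioi 0, y * beta y * U y := by
        rw [integral_div]
        ring

end Fragmentation

theorem DecayingEigenfunction.first_moment_identity {V Lam mu0 : ℝ}
    {tau beta : ℝ → ℝ} {kappa : ℝ → ℝ → ℝ} {U U' : ℝ → ℝ}
    (hkap_supp : ∀ x y : ℝ, y ≤ x → kappa x y = 0)
    (hkap_mom : ∀ y > 0, ∫ x in (0:ℝ)..y, x * kappa x y = y / 2)
    (hU : DecayingEigenfunction V Lam tau (fun _ => mu0) beta kappa U U') :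
    V * (∫ x in Ioi 0, tau x * U x) + (Lam - mu0) * ∫ x in Ioi 0, x * U x = 0 := by
  set g : ℝ → ℝ := fun x => x * ∫ y in Ioi x, beta y * kappa x y * U y
  have hderiv : ∀ x ∈ Ioi (0:ℝ), HasDerivAt (fun x => V * (x * (tau x * U x)))
      (V * (tau x * U x + x * U' x)) x := fun x hx => by
    simpa using ((hasDerivAt_id x).mul (hU.hasDeriv x hx)).const_mul V
  have hmoment : EqOn (fun x => V * (tau x * U x + x * U' x))
      (fun x => V * (tau x * U x) + (Lam - mu0) * (x * U x) + (2 * g x - x * beta x * U x))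
      (Ioi 0) := fun x hx => by
    linear_combination x * hU.eigen x hx
  have hint_gain : IntegrableOn (fun x => 2 * g x) (Ioi 0) :=
    (integrableOn_fragmentation_moment hkap_supp hU.int_xfrag).const_mul 2
  have hint_balance : IntegrableOn (fun x => 2 * g x - x * beta x * U x) (Ioi 0) :=
    hint_gain.sub hU.int_xbetaU
  have hint_rest : IntegrableOn (fun x => V * (tau x * U x) + (Lam - mu0) * (x * U x)) (Ioi 0) :=
    (hU.int_tauU.const_mul V).add (hU.int_xU.const_mul (Lam - mu0))
  have hboundary : ∫ x in Ioi 0, V * (tau x * U x + x * U' x) = 0 := by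
    refine (integral_Ioi_of_hasDerivAt_of_tendsto_nhdsGT hderiv
      ((hint_rest.add hint_balance).congr_fun hmoment.symm measurableSet_Ioi) ?_ ?_).trans
      (sub_zero 0)
    · simpa using ((tendsto_id.mono_left nhdsWithin_le_nhds).mul hU.lim_zero).const_mul V
    · simpa using hU.lim_xtop.const_mul V
  have hbalance : ∫ x in Ioi 0, (2 * g x - x * beta x * U x) = 0 := by
    rw [integral_sub hint_gain hU.int_xbetaU, integral_const_mul,
      integral_fragmentation_moment hkap_supp hkap_mom hU.int_xfrag, sub_self]
  rwa [setIntegral_congr_fun measurableSet_Ioi hmoment, integral_add hint_rest hint_balance,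
    hbalance, add_zero, integral_add (hU.int_tauU.const_mul V) (hU.int_xU.const_mul _),
    integral_const_mul, integral_const_mul] at hboundary

theorem eigenvalue_le_degradation_general
    (V Lam mu0 : ℝ) (hV : 0 ≤ V)
    (tau beta : ℝ → ℝ) (kappa : ℝ → ℝ → ℝ) (U U' : ℝ → ℝ)
    (htau_nn : ∀ x > 0, 0 ≤ tau x)
    (hkap_supp : ∀ x y : ℝ, y ≤ x → kappa x y = 0)
    (hkap_mom : ∀ y > 0, ∫ x in (0:ℝ)..y, x * kappa x y = y / 2)
    (hU : DecayingEigenfunction V Lam tau (fun _ => mu0) beta kappa U U')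
    (hpos : 0 < ∫ x in Ioi (0:ℝ), x * U x) :
    Lam ≤ mu0 := by
  have hmoment := hU.first_moment_identity hkap_supp hkap_mom
  have htauU : 0 ≤ ∫ x in Ioi 0, tau x * U x :=
    setIntegral_nonneg measurableSet_Ioi fun x hx => mul_nonneg (htau_nn x hx) (hU.nonneg x hx)
  nlinarith [mul_nonneg hV htauU]

/-- **Upper bound on the eigenvalue by the degradation rate**: for `V ≥ 0`, a constant
degradation rate `μ ≡ μ₀` and nonnegative `τ`, any decaying eigenfunction with positive
first moment forces `Λ ≤ μ₀`. -/
theorem eigenvalue_le_degradation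
    (V Lam mu0 : ℝ) (hV : 0 ≤ V) (hmu0 : 0 ≤ mu0)
    (tau beta : ℝ → ℝ) (kappa : ℝ → ℝ → ℝ) (U U' : ℝ → ℝ)
    (htau_nn : ∀ x > 0, 0 ≤ tau x)
    (hbeta_nn : ∀ x > 0, 0 ≤ beta x)
    (hkap_nn : ∀ x y : ℝ, 0 ≤ kappa x y)
    (hkap_supp : ∀ x y : ℝ, y ≤ x → kappa x y = 0)
    (hkap_mass : ∀ y > 0, ∫ x in (0:ℝ)..y, kappa x y = 1)
    (hkap_mom : ∀ y > 0, ∫ x in (0:ℝ)..y, x * kappa x y = y / 2)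
    (hU : DecayingEigenfunction V Lam tau (fun _ => mu0) beta kappa U U')
    (hpos : 0 < ∫ x in Ioi (0:ℝ), x * U x) :
    Lam ≤ mu0 :=
  eigenvalue_le_degradation_general V Lam mu0 hV tau beta kappa U U' htau_nn hkap_supp hkap_mom hU
    hpos
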